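/- For r > 0 and integer m ≥ 1, 1 + (1/(4m²)) (d²/dr² + ((2m−1)/r) d/dr)(m log(1 − e^{−r²}) + r²/(e^{r²}−1)) = γ_m(r²/2), where γ_m(t) = [((m²+m)/2 sinh²t + t²) cosh t − (m+1)t sinh t]/(m² sinh³t) + (m−1)/(2m). -/

import Mathlib

open Real

noncomputable def gammaCorr (m : ℕ) (t : ℝ) : ℝ :=
  ((((m : ℝ) ^ 2 + m) / 2 * Real.sinh t ^ 2 + t ^ 2) * Real.cosh t
      - ((m : ℝ) + 1) * t * Real.sinh t) / ((m : ℝ) ^ 2 * Real.sinh t ^ 3)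
    + ((m : ℝ) - 1) / (2 * m)

noncomputable def gAux (m : ℕ) (s : ℝ) : ℝ :=
  2 * s * (((m : ℝ) + 1) * (Real.exp (s ^ 2) - 1) - s ^ 2 * Real.exp (s ^ 2))
    / (Real.exp (s ^ 2) - 1) ^ 2

noncomputable def gAux' (m : ℕ) (s : ℝ) : ℝ :=
  ((2 * (((m : ℝ) + 1) * (Real.exp (s ^ 2) - 1) - s ^ 2 * Real.exp (s ^ 2))
      + 2 * s * (((m : ℝ) + 1) * (Real.exp (s ^ 2) * (2 * s))
          - (2 * s * Real.exp (s ^ 2) + s ^ 2 * (Real.exp (s ^ 2) * (2 * s)))))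
      * (Real.exp (s ^ 2) - 1) ^ 2
    - 2 * s * (((m : ℝ) + 1) * (Real.exp (s ^ 2) - 1) - s ^ 2 * Real.exp (s ^ 2))
      * (2 * (Real.exp (s ^ 2) - 1) ^ 1 * (Real.exp (s ^ 2) * (2 * s))))
    / ((Real.exp (s ^ 2) - 1) ^ 2) ^ 2

lemma key_facts (s : ℝ) (hs : s ≠ 0) :
    1 < Real.exp (s ^ 2) := by
  have hs2 : (0:ℝ) < s ^ 2 := by positivity
  exact Real.one_lt_exp_iff.mpr hs2

lemma hasDerivAt_sq_exp (s : ℝ) :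
    HasDerivAt (fun s : ℝ => Real.exp (s ^ 2)) (Real.exp (s ^ 2) * (2 * s)) s := by
  have h1 : HasDerivAt (fun s : ℝ => s ^ 2) (2 * s) s := by
    simpa using hasDerivAt_pow 2 s
  exact h1.exp

lemma hasDerivAt_f (m : ℕ) (s : ℝ) (hs : s ≠ 0) :
    HasDerivAt (fun s : ℝ =>
      (m : ℝ) * Real.log (1 - Real.exp (-s ^ 2)) + s ^ 2 / (Real.exp (s ^ 2) - 1))
      (gAux m s) s := by
  have hE : 1 < Real.exp (s ^ 2) := key_facts s hs
  have hE0 : Real.exp (s ^ 2) ≠ 0 := (Real.exp_pos _).ne'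
  have hEne : Real.exp (s ^ 2) - 1 ≠ 0 := sub_ne_zero.mpr hE.ne'
  have hlt1 : Real.exp (-s ^ 2) < 1 := by
    rw [Real.exp_neg]
    exact inv_lt_one_of_one_lt₀ hE
  have hpos : (0:ℝ) < 1 - Real.exp (-s ^ 2) := by linarith
  have h1 : HasDerivAt (fun s : ℝ => s ^ 2) (2 * s) s := by
    simpa using hasDerivAt_pow 2 s
  have h2 : HasDerivAt (fun s : ℝ => Real.exp (-s ^ 2))
      (Real.exp (-s ^ 2) * (-(2 * s))) s := h1.neg.exp
  have h3 : HasDerivAt (fun s : ℝ => 1 - Real.exp (-s ^ 2))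
      (0 - Real.exp (-s ^ 2) * (-(2 * s))) s := (hasDerivAt_const s 1).sub h2
  have h4 : HasDerivAt (fun s : ℝ => Real.log (1 - Real.exp (-s ^ 2)))
      ((0 - Real.exp (-s ^ 2) * (-(2 * s))) / (1 - Real.exp (-s ^ 2))) s :=
    h3.log hpos.ne'
  have h5 : HasDerivAt (fun s : ℝ => Real.exp (s ^ 2) - 1)
      (Real.exp (s ^ 2) * (2 * s)) s := by
    simpa using (hasDerivAt_sq_exp s).sub_const 1
  have h6 := (h4.const_mul (m : ℝ)).add (h1.div h5 hEne)
  refine HasDerivAt.congr_deriv h6 ?_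
  unfold gAux
  rw [Real.exp_neg]
  field_simp
  ring

lemma hasDerivAt_g (m : ℕ) (s : ℝ) (hs : s ≠ 0) :
    HasDerivAt (gAux m) (gAux' m s) s := by
  have hE : 1 < Real.exp (s ^ 2) := key_facts s hs
  have hEne : Real.exp (s ^ 2) - 1 ≠ 0 := sub_ne_zero.mpr hE.ne'
  have h1 : HasDerivAt (fun s : ℝ => s ^ 2) (2 * s) s := by
    simpa using hasDerivAt_pow 2 s
  have hEd := hasDerivAt_sq_exp s
  have h5 : HasDerivAt (fun s : ℝ => Real.exp (s ^ 2) - 1)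
      (Real.exp (s ^ 2) * (2 * s)) s := by
    simpa using hEd.sub_const 1
  have hA : HasDerivAt
      (fun s : ℝ => ((m : ℝ) + 1) * (Real.exp (s ^ 2) - 1) - s ^ 2 * Real.exp (s ^ 2))
      (((m : ℝ) + 1) * (Real.exp (s ^ 2) * (2 * s))
        - (2 * s * Real.exp (s ^ 2) + s ^ 2 * (Real.exp (s ^ 2) * (2 * s)))) s :=
    (h5.const_mul _).sub (h1.mul hEd)
  have h2s : HasDerivAt (fun s : ℝ => 2 * s) 2 s := by
    simpa using (hasDerivAt_id s).const_mul 2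
  have hN := h2s.mul hA
  have hD : HasDerivAt (fun s : ℝ => (Real.exp (s ^ 2) - 1) ^ 2)
      (2 * (Real.exp (s ^ 2) - 1) ^ 1 * (Real.exp (s ^ 2) * (2 * s))) s := h5.pow 2
  have hDne : (Real.exp (s ^ 2) - 1) ^ 2 ≠ 0 := pow_ne_zero _ hEne
  exact hN.div hD hDne

theorem pair_correlation_radial (m : ℕ) (hm : 1 ≤ m) (r : ℝ) (hr : 0 < r) :
    1 + (1 / (4 * (m : ℝ) ^ 2)) *
        (deriv (deriv (fun s : ℝ =>
            (m : ℝ) * Real.log (1 - Real.exp (-s ^ 2))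
              + s ^ 2 / (Real.exp (s ^ 2) - 1))) r
          + ((2 * (m : ℝ) - 1) / r) *
            deriv (fun s : ℝ =>
              (m : ℝ) * Real.log (1 - Real.exp (-s ^ 2))
                + s ^ 2 / (Real.exp (s ^ 2) - 1)) r)
      = gammaCorr m (r ^ 2 / 2) := by
  have hne : ∀ᶠ s in nhds r, s ≠ 0 := eventually_ne_nhds hr.ne'
  have hd1 : deriv (fun s : ℝ =>
      (m : ℝ) * Real.log (1 - Real.exp (-s ^ 2)) + s ^ 2 / (Real.exp (s ^ 2) - 1)) r
      = gAux m r := (hasDerivAt_f m r hr.ne').deriv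
  have heq : deriv (fun s : ℝ =>
      (m : ℝ) * Real.log (1 - Real.exp (-s ^ 2)) + s ^ 2 / (Real.exp (s ^ 2) - 1))
      =ᶠ[nhds r] gAux m := hne.mono fun s hs => (hasDerivAt_f m s hs).deriv
  have hd2 : deriv (deriv (fun s : ℝ =>
      (m : ℝ) * Real.log (1 - Real.exp (-s ^ 2)) + s ^ 2 / (Real.exp (s ^ 2) - 1))) r
      = gAux' m r := by
    rw [heq.deriv_eq]
    exact (hasDerivAt_g m r hr.ne').deriv
  rw [hd1, hd2]
  -- now pure algebra
  have hE : 1 < Real.exp (r ^ 2) := key_facts r hr.ne'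
  have hx : Real.exp (r ^ 2) = Real.exp (r ^ 2 / 2) * Real.exp (r ^ 2 / 2) := by
    rw [← Real.exp_add]; ring_nf
  have hx1 : 1 < Real.exp (r ^ 2 / 2) := Real.one_lt_exp_iff.mpr (by positivity)
  have hx0 : Real.exp (r ^ 2 / 2) ≠ 0 := (Real.exp_pos _).ne'
  have hm0 : (m : ℝ) ≠ 0 := Nat.cast_ne_zero.mpr (by omega)
  have hsinh : Real.sinh (r ^ 2 / 2) ≠ 0 := by
    simp [Real.sinh_eq_zero]; positivity
  unfold gammaCorr gAux gAux'
  rw [Real.sinh_eq, Real.cosh_eq, Real.exp_neg, hx]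
  have hEne : Real.exp (r ^ 2 / 2) * Real.exp (r ^ 2 / 2) - 1 ≠ 0 := by
    nlinarith
  have hs2 : Real.exp (r ^ 2 / 2) - (Real.exp (r ^ 2 / 2))⁻¹ ≠ 0 := by
    rw [sub_ne_zero]
    intro h
    have : Real.exp (r ^ 2 / 2) * Real.exp (r ^ 2 / 2) = 1 := by
      field_simp at h; nlinarith
    nlinarith
  have hEne2 : Real.exp (r ^ 2 / 2) ^ 2 - 1 ≠ 0 := by rw [sq]; exact hEne
  field_simp
  ring
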